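/- arXiv:1910.05936 — 6 statements merged into one kernel-verified Lean document; each statement's English description precedes it below -/
import Mathlib

section
/- Let n be a positive integer and let G = {(i_1,j_1), (i_2,j_2), …, (i_n,j_n)} be a subset of cardinality n of the index set {(i,j) : 1 ≤ i ≤ j ≤ n}. Then G is a generating index set of ST(n) if and only if det(M_G) is odd, where M_G is the n×n integer matrix whose (k,l)-entry is the binomial coefficient C(i_k - 1, j_k - l), with the convention C(a,b) = 0 whenever b < 0 or b > a. -/
open Finset

namespace Steinhaus

/-- Extended binomial coefficient `C(a,b)` for integers `a`, `b`:
`C(a,0) = 1`, `C(0,b) = 0` for `b > 0`, Pascal's rule everywhere; in particular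
`C(a,b) = 0` for `b < 0` and `C(a,b) = (-1)^b C(b-a-1,b)` for `a < 0 ≤ b`. -/
def ibinom (a b : ℤ) : ℤ :=
  if b < 0 then 0
  else if 0 ≤ a then (a.toNat.choose b.toNat : ℤ)
  else (-1) ^ b.toNat * ((b - a - 1).toNat.choose b.toNat : ℤ)

/-- `(i,j)` is an index of the triangle of size `n`, i.e. `1 ≤ i ≤ j ≤ n`. -/
def InTri (n i j : ℕ) : Prop := 1 ≤ i ∧ i ≤ j ∧ j ≤ n

instance (n i j : ℕ) : Decidable (InTri n i j) :=
  inferInstanceAs (Decidable (1 ≤ i ∧ i ≤ j ∧ j ≤ n))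

/-- The `ZMod 2`-vector space of binary Steinhaus triangles of size `n`,
realized as functions `ℕ → ℕ → ZMod 2` vanishing outside the triangle
`{(i,j) | 1 ≤ i ≤ j ≤ n}` and satisfying the local rule
`a i j = a (i-1) (j-1) + a (i-1) j` inside it. -/
def ST (n : ℕ) : Submodule (ZMod 2) (ℕ → ℕ → ZMod 2) where
  carrier := {a | (∀ i j, ¬ InTri n i j → a i j = 0) ∧
    ∀ i j, 2 ≤ i → i ≤ j → j ≤ n → a i j = a (i - 1) (j - 1) + a (i - 1) j}
  add_mem' := by
    rintro a b ⟨ha0, ha1⟩ ⟨hb0, hb1⟩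
    refine ⟨fun i j h => ?_, fun i j h2 hij hjn => ?_⟩
    · simp only [Pi.add_apply, ha0 i j h, hb0 i j h, add_zero]
    · simp only [Pi.add_apply, ha1 i j h2 hij hjn, hb1 i j h2 hij hjn]
      ring
  zero_mem' := ⟨fun _ _ _ => rfl, fun _ _ _ _ _ => by simp⟩
  smul_mem' := by
    rintro c a ⟨ha0, ha1⟩
    refine ⟨fun i j h => ?_, fun i j h2 hij hjn => ?_⟩
    · simp only [Pi.smul_apply, ha0 i j h, smul_zero]
    · simp only [Pi.smul_apply, ha1 i j h2 hij hjn, smul_add]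

/-- The first row of the triangle `a` (of size `n`) is the sequence `S`;
equivalently, `a = ∇S`. -/
def FirstRow (n : ℕ) (a : ℕ → ℕ → ZMod 2) (S : ℕ → ZMod 2) : Prop :=
  ∀ j, 1 ≤ j → j ≤ n → a 1 j = S j

/-- The rotation `r` by 120 degrees: `r(a)_{i,j} = a_{j-i+1, n-i+1}`. -/
def rot (n : ℕ) (a : ℕ → ℕ → ZMod 2) : ℕ → ℕ → ZMod 2 :=
  fun i j => if InTri n i j then a (j - i + 1) (n - i + 1) else 0

/-- The horizontal reflection `h`: `h(a)_{i,j} = a_{i, n-j+i}`. -/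
def hrefl (n : ℕ) (a : ℕ → ℕ → ZMod 2) : ℕ → ℕ → ZMod 2 :=
  fun i j => if InTri n i j then a i (n - j + i) else 0

lemma rot_add (n : ℕ) (a b : ℕ → ℕ → ZMod 2) :
    rot n (a + b) = rot n a + rot n b := by
  funext i j
  simp only [rot, Pi.add_apply]
  split_ifs <;> simp

lemma rot_smul (n : ℕ) (c : ZMod 2) (a : ℕ → ℕ → ZMod 2) :
    rot n (c • a) = c • rot n a := by
  funext i j
  simp only [rot, Pi.smul_apply]
  split_ifs <;> simp

lemma hrefl_add (n : ℕ) (a b : ℕ → ℕ → ZMod 2) :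
    hrefl n (a + b) = hrefl n a + hrefl n b := by
  funext i j
  simp only [hrefl, Pi.add_apply]
  split_ifs <;> simp

lemma hrefl_smul (n : ℕ) (c : ZMod 2) (a : ℕ → ℕ → ZMod 2) :
    hrefl n (c • a) = c • hrefl n a := by
  funext i j
  simp only [hrefl, Pi.smul_apply]
  split_ifs <;> simp

/-- The linear map `ρ = r² + r + id`. -/
def rho (n : ℕ) (a : ℕ → ℕ → ZMod 2) : ℕ → ℕ → ZMod 2 :=
  rot n (rot n a) + rot n a + a

/-- The subspace of rotationally symmetric Steinhaus triangles (fixed by `r`). -/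
def RST (n : ℕ) : Submodule (ZMod 2) (ℕ → ℕ → ZMod 2) where
  carrier := {a | a ∈ ST n ∧ rot n a = a}
  add_mem' := by
    rintro a b ⟨ha, ha'⟩ ⟨hb, hb'⟩
    exact ⟨add_mem ha hb, by rw [rot_add, ha', hb']⟩
  zero_mem' := ⟨zero_mem _, by funext i j; simp [rot]⟩
  smul_mem' := by
    rintro c a ⟨ha, ha'⟩
    exact ⟨Submodule.smul_mem _ c ha, by rw [rot_smul, ha']⟩

/-- The subspace of horizontally symmetric Steinhaus triangles (fixed by `h`). -/
def HST (n : ℕ) : Submodule (ZMod 2) (ℕ → ℕ → ZMod 2) where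
  carrier := {a | a ∈ ST n ∧ hrefl n a = a}
  add_mem' := by
    rintro a b ⟨ha, ha'⟩ ⟨hb, hb'⟩
    exact ⟨add_mem ha hb, by rw [hrefl_add, ha', hb']⟩
  zero_mem' := ⟨zero_mem _, by funext i j; simp [hrefl]⟩
  smul_mem' := by
    rintro c a ⟨ha, ha'⟩
    exact ⟨Submodule.smul_mem _ c ha, by rw [hrefl_smul, ha']⟩

/-- The subspace of dihedrally symmetric Steinhaus triangles (fixed by `r` and `h`). -/
def DST (n : ℕ) : Submodule (ZMod 2) (ℕ → ℕ → ZMod 2) where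
  carrier := {a | a ∈ ST n ∧ rot n a = a ∧ hrefl n a = a}
  add_mem' := by
    rintro a b ⟨ha, ha', ha''⟩ ⟨hb, hb', hb''⟩
    exact ⟨add_mem ha hb, by rw [rot_add, ha', hb'], by rw [hrefl_add, ha'', hb'']⟩
  zero_mem' := ⟨zero_mem _, by funext i j; simp [rot], by funext i j; simp [hrefl]⟩
  smul_mem' := by
    rintro c a ⟨ha, ha', ha''⟩
    exact ⟨Submodule.smul_mem _ c ha, by rw [rot_smul, ha'],
      by rw [hrefl_smul, ha'']⟩

/-- `σ₂`: the sum of the first `n` terms of a sequence over `ZMod 2`. -/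
def seqSum (n : ℕ) (S : ℕ → ZMod 2) : ZMod 2 := ∑ j ∈ Finset.Icc 1 n, S j

/-- The subspace `DST₀(n)` of dihedrally symmetric Steinhaus triangles whose
first row has zero sum. -/
def DST0 (n : ℕ) : Submodule (ZMod 2) (ℕ → ℕ → ZMod 2) where
  carrier := {a | a ∈ DST n ∧ seqSum n (a 1) = 0}
  add_mem' := by
    rintro a b ⟨ha, ha'⟩ ⟨hb, hb'⟩
    refine ⟨add_mem ha hb, ?_⟩
    have h : seqSum n ((a + b) 1) = seqSum n (a 1) + seqSum n (b 1) := by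
      simp [seqSum, Finset.sum_add_distrib]
    rw [h, ha', hb', add_zero]
  zero_mem' := ⟨zero_mem _, by simp [seqSum]⟩
  smul_mem' := by
    rintro c a ⟨ha, ha'⟩
    refine ⟨Submodule.smul_mem _ c ha, ?_⟩
    have h : seqSum n ((c • a) 1) = c • seqSum n (a 1) := by
      simp [seqSum, smul_eq_mul, Finset.mul_sum]
    rw [h, ha', smul_zero]

/-- The derived sequence `∂S`. -/
def der (S : ℕ → ZMod 2) : ℕ → ZMod 2 := fun j => S j + S (j + 1)

/-- The antiderived sequence `∫_{i,x} S`, whose `j`-th term is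
`x + Σ_{k=1}^{i-1} S k + Σ_{k=1}^{j-1} S k`. -/
def antider (i : ℕ) (x : ZMod 2) (S : ℕ → ZMod 2) : ℕ → ZMod 2 :=
  fun j => x + (∑ k ∈ Finset.Ico 1 i, S k) + (∑ k ∈ Finset.Ico 1 j, S k)

/-- A sequence of length `n` is symmetric. -/
def SymmSeq (n : ℕ) (S : ℕ → ZMod 2) : Prop :=
  ∀ j, 1 ≤ j → j ≤ n → S (n - j + 1) = S j

/-- The binomial sequence `bs(k,l)` whose `j`-th term is `C(l+j-1, k) mod 2`. -/
def bseq (k l : ℤ) : ℕ → ZMod 2 := fun j => ((ibinom (l + (j : ℤ) - 1) k : ℤ) : ZMod 2)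

/-- The map `H : ST(n) → ST(n-3)` removing the first row and the two sides. -/
def Hmap (n : ℕ) (a : ℕ → ℕ → ZMod 2) : ℕ → ℕ → ZMod 2 :=
  fun i j => if InTri (n - 3) i j then a (1 + i) (2 + j) else 0

/-- The projection `π_G` of a subspace `V` of triangles onto coordinates in `G`. -/
def proj (V : Submodule (ZMod 2) (ℕ → ℕ → ZMod 2)) (G : Set (ℕ × ℕ)) :
    V →ₗ[ZMod 2] (G → ZMod 2) where
  toFun a := fun p => (a : ℕ → ℕ → ZMod 2) p.1.1 p.1.2
  map_add' := fun _ _ => rfl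
  map_smul' := fun _ _ => rfl

/-- `G` is a generating index set of the subspace `V` of `ST(n)`:
`G` consists of triangle indices and `π_G : V → (ZMod 2)^G` is an isomorphism. -/
def IsGenIndexSet (n : ℕ) (V : Submodule (ZMod 2) (ℕ → ℕ → ZMod 2))
    (G : Set (ℕ × ℕ)) : Prop :=
  (∀ p ∈ G, InTri n p.1 p.2) ∧ Function.Bijective (proj V G)

end Steinhaus

/-!
The entry `(i,j)` of `∇S` is `∑ₗ C(i-1, j-l) S_l` (Pascal's rule propagates the local rule),
and a Steinhaus triangle is determined by its first row, so `S ↦ ∇S` is an isomorphism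
`(ZMod 2)ⁿ ≃ ST(n)`. Composed with `π_G`, it becomes multiplication by `M_G mod 2`, which is
bijective iff `det M_G` is a unit of `ZMod 2`, i.e. odd.
-/

theorem Matrix.mulVec_bijective_iff_isUnit {m R : Type*} [Fintype m] [DecidableEq m]
    [CommRing R] {A : Matrix m m R} : Function.Bijective A.mulVec ↔ IsUnit A :=
  ⟨fun h => mulVec_surjective_iff_isUnit.mp h.2,
    fun h => ⟨mulVec_injective_of_isUnit h, mulVec_surjective_iff_isUnit.mpr h⟩⟩

theorem Int.isUnit_cast_zmod_two_iff_odd (d : ℤ) : IsUnit (d : ZMod 2) ↔ Odd d := by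
  rw [isUnit_iff_ne_zero, Ne, ZMod.intCast_zmod_eq_zero_iff_dvd, Nat.cast_ofNat,
    ← even_iff_two_dvd, Int.not_even_iff_odd]

namespace Steinhaus

theorem ibinom_add_one_left {a : ℤ} (ha : 0 ≤ a) (b : ℤ) :
    ibinom (a + 1) b = ibinom a (b - 1) + ibinom a b := by
  unfold ibinom
  rcases lt_trichotomy b 0 with hb | rfl | hb
  · simp [hb, show b - 1 < 0 by omega]
  · simp [ha, show 0 ≤ a + 1 by omega]
  · rw [if_neg (by omega), if_pos (by omega), if_neg (by omega), if_pos ha,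
      if_neg (by omega), if_pos ha, show (a + 1).toNat = a.toNat + 1 by omega,
      show b.toNat = (b - 1).toNat + 1 by omega, Nat.choose_succ_succ]
    push_cast
    ring

theorem ibinom_zero_left (b : ℤ) : ibinom 0 b = if b = 0 then 1 else 0 := by
  unfold ibinom
  rcases lt_trichotomy b 0 with hb | rfl | hb
  · simp [hb, hb.ne]
  · simp
  · simp [hb.ne', hb.not_gt, Nat.choose_eq_zero_of_lt (show 0 < b.toNat by omega)]

/-- The coefficient of `S (l+1)` in the entry `(i,j)` of `∇S`; `l` is 0-based to match
`Fin n`. -/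
def coeff (i j l : ℕ) : ZMod 2 :=
  ((ibinom ((i : ℤ) - 1) ((j : ℤ) - ((l : ℤ) + 1)) : ℤ) : ZMod 2)

theorem coeff_pascal {i j : ℕ} (hi : 2 ≤ i) (hj : 1 ≤ j) (l : ℕ) :
    coeff i j l = coeff (i - 1) (j - 1) l + coeff (i - 1) j l := by
  unfold coeff
  rw [show (i : ℤ) - 1 = ((i - 1 : ℕ) : ℤ) - 1 + 1 by omega,
    ibinom_add_one_left (by omega), Nat.cast_sub hj]
  push_cast
  ring_nf

theorem coeff_one_left {n : ℕ} (l k : Fin n) :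
    coeff 1 ((k : ℕ) + 1) l = if k = l then 1 else 0 := by
  simp only [coeff, Nat.cast_one, sub_self, ibinom_zero_left, Fin.ext_iff]
  split_ifs <;> first | rfl | omega

def nabla (n : ℕ) (S : Fin n → ZMod 2) : ℕ → ℕ → ZMod 2 :=
  fun i j => if InTri n i j then ∑ l : Fin n, coeff i j l * S l else 0

theorem nabla_mem (n : ℕ) (S : Fin n → ZMod 2) : nabla n S ∈ ST n := by
  refine ⟨fun i j h => if_neg h, fun i j hi hij hjn => ?_⟩
  simp only [nabla, if_pos (show InTri n i j from ⟨by omega, hij, hjn⟩),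
    if_pos (show InTri n (i - 1) (j - 1) from ⟨by omega, by omega, by omega⟩),
    if_pos (show InTri n (i - 1) j from ⟨by omega, by omega, hjn⟩), ← Finset.sum_add_distrib,
    coeff_pascal hi (show 1 ≤ j by omega), add_mul]

theorem nabla_one_left (n : ℕ) (S : Fin n → ZMod 2) (k : Fin n) :
    nabla n S 1 ((k : ℕ) + 1) = S k := by
  simp [nabla, InTri, coeff_one_left]

theorem eq_of_mem_ST_of_firstRow {n : ℕ} {a b : ℕ → ℕ → ZMod 2} (ha : a ∈ ST n)
    (hb : b ∈ ST n) (hab : FirstRow n a (b 1)) : a = b := by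
  funext i
  induction i with
  | zero => funext j; rw [ha.1 0 j (by simp [InTri]), hb.1 0 j (by simp [InTri])]
  | succ i ih =>
    funext j
    by_cases hij : InTri n (i + 1) j
    · obtain ⟨-, hij, hjn⟩ := hij
      rcases Nat.eq_zero_or_pos i with rfl | hi
      · exact hab j (by omega) hjn
      · rw [ha.2 (i + 1) j (by omega) hij hjn, hb.2 (i + 1) j (by omega) hij hjn,
          Nat.add_sub_cancel, ih]
    · rw [ha.1 _ j hij, hb.1 _ j hij]

def nablaEquiv (n : ℕ) : (Fin n → ZMod 2) ≃ₗ[ZMod 2] ST n where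
  toFun S := ⟨nabla n S, nabla_mem n S⟩
  invFun a k := (a : ℕ → ℕ → ZMod 2) 1 ((k : ℕ) + 1)
  map_add' S T := by
    ext i j
    simp only [nabla, Submodule.coe_add, Pi.add_apply, mul_add, Finset.sum_add_distrib]
    split_ifs <;> simp
  map_smul' c S := by
    ext i j
    simp only [nabla, SetLike.val_smul, Pi.smul_apply, smul_eq_mul, RingHom.id_apply]
    split_ifs
    · simp only [Finset.mul_sum, mul_left_comm]
    · simp
  left_inv S := funext (nabla_one_left n S)
  right_inv a := Subtype.ext <| eq_of_mem_ST_of_firstRow (nabla_mem n _) a.2 fun j hj hjn => by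
    obtain ⟨k, rfl⟩ : ∃ k : Fin n, (k : ℕ) + 1 = j := ⟨⟨j - 1, by omega⟩, by simp; omega⟩
    exact nabla_one_left n _ k

theorem proj_nablaEquiv_reindex {n : ℕ} {ij : Fin n → ℕ × ℕ} (hinj : Function.Injective ij)
    (htri : ∀ k, InTri n (ij k).1 (ij k).2) :
    ⇑(LinearEquiv.funCongrLeft (ZMod 2) (ZMod 2) (Equiv.ofInjective ij hinj)) ∘
        ⇑(proj (ST n) (Set.range ij)) ∘ ⇑(nablaEquiv n) =
      (Matrix.of fun k l : Fin n => coeff (ij k).1 (ij k).2 l).mulVec := by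
  funext S k
  simp [proj, nablaEquiv, nabla, htri k, Matrix.mulVec, dotProduct, LinearMap.funLeft]

theorem statement1_general (n : ℕ) (ij : Fin n → ℕ × ℕ)
    (hinj : Function.Injective ij)
    (htri : ∀ k, InTri n (ij k).1 (ij k).2) :
    IsGenIndexSet n (ST n) (Set.range ij) ↔
      Odd (Matrix.det (Matrix.of fun k l : Fin n =>
        ibinom (((ij k).1 : ℤ) - 1) (((ij k).2 : ℤ) - (((l : ℕ) : ℤ) + 1)))) := by
  rw [IsGenIndexSet, and_iff_right (by rintro _ ⟨k, rfl⟩; exact htri k),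
    ← Int.isUnit_cast_zmod_two_iff_odd, Int.cast_det, ← Matrix.isUnit_iff_isUnit_det,
    ← Matrix.mulVec_bijective_iff_isUnit, ← Function.Bijective.of_comp_iff _
      (nablaEquiv n).bijective, ← Function.Bijective.of_comp_iff'
      (LinearEquiv.funCongrLeft (ZMod 2) (ZMod 2) (Equiv.ofInjective ij hinj)).bijective]
  exact Iff.of_eq (congrArg Function.Bijective (proj_nablaEquiv_reindex hinj htri))

/-- Proposition 2. A subset `G = {(i_1,j_1),…,(i_n,j_n)}` of
cardinality `n` of the triangle index set is a generating index set of `ST(n)`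
iff `det M_G` is odd, where `(M_G)_{k,l} = C(i_k - 1, j_k - l)`. -/
theorem statement1 (n : ℕ) (hn : 1 ≤ n) (ij : Fin n → ℕ × ℕ)
    (hinj : Function.Injective ij)
    (htri : ∀ k, InTri n (ij k).1 (ij k).2) :
    IsGenIndexSet n (ST n) (Set.range ij) ↔
      Odd (Matrix.det (Matrix.of fun k l : Fin n =>
        ibinom (((ij k).1 : ℤ) - 1) (((ij k).2 : ℤ) - (((l : ℕ) : ℤ) + 1)))) :=
  statement1_general n ij hinj htri

end Steinhaus
end

section
/- Let S be a sequence over Z/2Z of length n ≥ 3. The Steinhaus triangle ∇S is rotationally symmetric if and only if H(∇S) = ∇S' is rotationally symmetric and S = (σ₂(S')) · ∫_{i,x}S' · (σ₂(S')) for some i ∈ {1,…,n-2} and some x ∈ Z/2Z, where (σ₂(S')) denotes the one-term sequence whose term is σ₂(S') and · denotes concatenation of sequences. -/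
open Finset

/-!
Removing the first row and both sides of `∇S` leaves `H(∇S)`, whose first row
`S'_k = a_{2,k+2} = S_{k+1} + S_{k+2}` is the derived sequence of `(S_2, …, S_{n-1})`. So this
inner part of `S` is always `∫_{1,S_2} S'`, and `σ₂(S') = S_2 + S_{n-1}` by telescoping.
The rotation of `∇S` restricts to that of `H(∇S)`, and at the two top corners it forces
`S_1 = S_n = S_2 + S_{n-1}`. Conversely, given these and the symmetry of `H(∇S)`, the local rule
determines the left side of `∇S` (which must read `S` backwards) and then the right side (which
must read `S` forwards) by induction from the top corners, because the inner neighbours of the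
sides lie in `H(∇S)`; the apex closes up because `S_1 = S_2 + S_{n-1}`.
-/

namespace Steinhaus

section

variable {n : ℕ} {a : ℕ → ℕ → ZMod 2} {S : ℕ → ZMod 2}

lemma ST.apply_succ_succ (ha : a ∈ ST n) {i j : ℕ} (hi : 1 ≤ i) (hij : i ≤ j)
    (hj : j + 1 ≤ n) : a (i + 1) (j + 1) = a i j + a i (j + 1) := by
  simpa using ha.2 (i + 1) (j + 1) (by omega) (by omega) hj

lemma apply_two_of_firstRow (ha : a ∈ ST n) (hrow : FirstRow n a S) {m : ℕ} (hm : 1 ≤ m)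
    (hmn : m + 1 ≤ n) : a 2 (m + 1) = S m + S (m + 1) := by
  rw [ST.apply_succ_succ ha le_rfl hm hmn, hrow m hm (by omega), hrow (m + 1) (by omega) hmn]

lemma sum_Ico_inner_second_row (ha : a ∈ ST n) (hrow : FirstRow n a S) {m : ℕ} (hm : 1 ≤ m)
    (hmn : m ≤ n - 2) : ∑ k ∈ Ico 1 m, a 2 (2 + k) = S 2 + S (m + 1) := by
  have hterm : ∀ k ∈ Ico 1 m, a 2 (2 + k) = S (k + 1 + 1) - S (k + 1) := by
    intro k hk
    rw [mem_Ico] at hk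
    rw [CharTwo.sub_eq_add, add_comm 2, apply_two_of_firstRow ha hrow (by omega) (by omega),
      add_comm]
  rw [sum_congr rfl hterm, sum_Ico_sub (fun k => S (k + 1)) hm, CharTwo.sub_eq_add, add_comm]

lemma seqSum_inner_second_row (ha : a ∈ ST n) (hrow : FirstRow n a S) (hn : 3 ≤ n) :
    seqSum (n - 3) (fun j => a 2 (2 + j)) = S 2 + S (n - 1) := by
  rw [seqSum, ← Ico_add_one_right_eq_Icc, show n - 3 + 1 = n - 2 by omega,
    sum_Ico_inner_second_row ha hrow (by omega) le_rfl, show n - 2 + 1 = n - 1 by omega]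

lemma antider_inner_second_row (ha : a ∈ ST n) (hrow : FirstRow n a S) {j : ℕ} (hj : 2 ≤ j)
    (hjn : j ≤ n - 1) : S j = antider 1 (S 2) (fun k => a 2 (2 + k)) (j - 1) := by
  rw [antider, Ico_self, sum_empty, add_zero,
    sum_Ico_inner_second_row ha hrow (by omega) (by omega), Nat.sub_add_cancel (by omega)]
  grind

lemma rot_eq_self_iff (ha : a ∈ ST n) :
    rot n a = a ↔ ∀ i j, InTri n i j → a (j - i + 1) (n - i + 1) = a i j := by
  refine ⟨fun h i j hij => ?_, fun h => funext₂ fun i j => ?_⟩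
  · simpa [rot, hij] using congrFun₂ h i j
  · by_cases hij : InTri n i j
    · simp [rot, hij, h]
    · simp [rot, hij, ha.1 i j hij]

lemma rot_Hmap_eq_self_iff : rot (n - 3) (Hmap n a) = Hmap n a ↔
    ∀ p q, 2 ≤ p → p + 1 ≤ q → q ≤ n - 1 → a (q - p + 1) (n - p + 1) = a p q := by
  have hpoint : ∀ i j, InTri (n - 3) i j → (rot (n - 3) (Hmap n a) i j = Hmap n a i j ↔
      a (2 + j - (1 + i) + 1) (n - (1 + i) + 1) = a (1 + i) (2 + j)) := by
    intro i j hij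
    have hrot : InTri (n - 3) (j - i + 1) (n - 3 - i + 1) := by unfold InTri at *; omega
    simp only [rot, Hmap, if_pos hij, if_pos hrot]
    unfold InTri at hij
    rw [show 1 + (j - i + 1) = 2 + j - (1 + i) + 1 by omega,
      show 2 + (n - 3 - i + 1) = n - (1 + i) + 1 by omega]
  constructor
  · intro h p q hp hpq hq
    obtain ⟨i, rfl⟩ : ∃ i, p = 1 + i := ⟨p - 1, by omega⟩
    obtain ⟨j, rfl⟩ : ∃ j, q = 2 + j := ⟨q - 2, by omega⟩
    exact (hpoint i j ⟨by omega, by omega, by omega⟩).1 (congrFun₂ h i j)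
  · intro h
    funext i j
    by_cases hij : InTri (n - 3) i j
    · obtain ⟨hi, hij', hjn⟩ := hij
      exact (hpoint i j ⟨hi, hij', hjn⟩).2 (h _ _ (by omega) (by omega) (by omega))
    · simp [rot, Hmap, hij]

lemma firstRow_ends_of_rot_eq_self (hn : 3 ≤ n) (ha : a ∈ ST n) (hrow : FirstRow n a S)
    (h : rot n a = a) : S n = S 1 ∧ S 1 = S 2 + S (n - 1) := by
  have hrot := (rot_eq_self_iff ha).1 h
  have hSn : S n = S 1 := by
    have hcorner := hrot 1 1 ⟨le_rfl, le_rfl, by omega⟩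
    rwa [Nat.sub_self, Nat.sub_add_cancel (by omega), hrow 1 le_rfl (by omega),
      hrow n (by omega) le_rfl] at hcorner
  refine ⟨hSn, ?_⟩
  have hcorner := hrot 1 2 ⟨le_rfl, by omega, by omega⟩
  have hsecond := apply_two_of_firstRow ha hrow (m := n - 1) (by omega) (by omega)
  rw [Nat.sub_add_cancel (by omega)] at hsecond
  rw [show n - 1 + 1 = n by omega, hsecond, hSn, hrow 2 (by omega) (by omega)] at hcorner
  grind

lemma left_side_of_interior (ha : a ∈ ST n) (hrow : FirstRow n a S)
    (hH : ∀ p q, 2 ≤ p → p + 1 ≤ q → q ≤ n - 1 → a (q - p + 1) (n - p + 1) = a p q)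
    (hS1 : S 1 = S 2 + S (n - 1)) (hSn : S n = S 1) {p : ℕ} (hp : 1 ≤ p) (hpn : p ≤ n - 1) :
    a p p = S (n - p + 1) := by
  induction p, hp using Nat.le_induction with
  | base => rw [hrow 1 le_rfl (by omega), Nat.sub_add_cancel (by omega), hSn]
  | succ p hp ih =>
    rw [ST.apply_succ_succ ha hp le_rfl (by omega), show n - (p + 1) + 1 = n - p by omega]
    rcases hp.eq_or_lt with rfl | hp
    · rw [hrow 1 le_rfl (by omega), hrow 2 (by omega) (by omega), hS1]
      grind
    · have hinner := hH p (p + 1) hp le_rfl (by omega)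
      rw [show p + 1 - p + 1 = 2 by omega,
        apply_two_of_firstRow ha hrow (m := n - p) (by omega) (by omega)] at hinner
      rw [ih (by omega), ← hinner]
      grind

lemma right_side_of_interior (ha : a ∈ ST n) (hrow : FirstRow n a S)
    (hH : ∀ p q, 2 ≤ p → p + 1 ≤ q → q ≤ n - 1 → a (q - p + 1) (n - p + 1) = a p q)
    (hS1 : S 1 = S 2 + S (n - 1)) (hSn : S n = S 1) {j : ℕ} (hj : 1 ≤ j) (hjn : j ≤ n - 1) :
    a j n = S j := by
  induction j, hj using Nat.le_induction with
  | base => rw [hrow n (by omega) le_rfl, hSn]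
  | succ j hj ih =>
    have hstep := ST.apply_succ_succ ha hj (by omega) (j := n - 1) (by omega)
    rw [Nat.sub_add_cancel (by omega)] at hstep
    rw [hstep, ih (by omega)]
    rcases hj.eq_or_lt with rfl | hj
    · rw [hrow (n - 1) (by omega) (by omega), hS1]
      grind
    · have hinner := hH j (n - 1) hj (by omega) le_rfl
      have hdiag := ST.apply_succ_succ ha (i := n - j) (j := n - j) (by omega) le_rfl (by omega)
      rw [show n - 1 - j + 1 = n - j by omega] at hinner
      rw [left_side_of_interior ha hrow hH hS1 hSn (p := n - j + 1) (by omega) (by omega),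
        left_side_of_interior ha hrow hH hS1 hSn (p := n - j) (by omega) (by omega),
        show n - (n - j + 1) + 1 = j by omega, show n - (n - j) + 1 = j + 1 by omega] at hdiag
      rw [← hinner]
      grind

lemma rot_eq_self_of_interior (hn : 2 ≤ n) (ha : a ∈ ST n) (hrow : FirstRow n a S)
    (hH : ∀ p q, 2 ≤ p → p + 1 ≤ q → q ≤ n - 1 → a (q - p + 1) (n - p + 1) = a p q)
    (hS1 : S 1 = S 2 + S (n - 1)) (hSn : S n = S 1) : rot n a = a := by
  have hapex : a n n = S 1 := by
    have h := ST.apply_succ_succ ha (i := n - 1) (j := n - 1) (by omega) le_rfl (by omega)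
    rw [Nat.sub_add_cancel (by omega)] at h
    rw [h, left_side_of_interior ha hrow hH hS1 hSn (p := n - 1) (by omega) le_rfl,
      right_side_of_interior ha hrow hH hS1 hSn (j := n - 1) (by omega) le_rfl,
      show n - (n - 1) + 1 = 2 by omega, hS1]
  have hleft : ∀ p, 1 ≤ p → p ≤ n → a p p = S (n - p + 1) := by
    intro p hp hpn
    rcases hpn.lt_or_eq with hpn | rfl
    · exact left_side_of_interior ha hrow hH hS1 hSn hp (by omega)
    · rw [hapex, Nat.sub_self]
  have hright : ∀ j, 1 ≤ j → j ≤ n → a j n = S j := by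
    intro j hj hjn
    rcases hjn.lt_or_eq with hjn | rfl
    · exact right_side_of_interior ha hrow hH hS1 hSn hj (by omega)
    · rw [hapex, hSn]
  refine (rot_eq_self_iff ha).2 fun i j ⟨hi, hij, hjn⟩ => ?_
  by_cases hi1 : i = 1
  · subst hi1
    rw [Nat.sub_add_cancel hij, Nat.sub_add_cancel (by omega), hrow j hij hjn,
      hright j hij hjn]
  by_cases hji : j = i
  · subst hji
    rw [Nat.sub_self, zero_add, hrow _ (by omega) (by omega), hleft j hi hjn]
  by_cases hjn' : j = n
  · subst hjn'
    rw [hleft (j - i + 1) (by omega) (by omega), show j - (j - i + 1) + 1 = i by omega,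
      hright i hi hij]
  exact hH i j (by omega) (by omega) (by omega)

end

/-- Proposition 5. For a sequence `S` of length `n ≥ 3`, the
triangle `∇S` is rotationally symmetric iff `H(∇S) = ∇S'` is rotationally
symmetric and `S = (σ₂(S')) · ∫_{i,x} S' · (σ₂(S'))` for some `i ∈ {1,…,n-2}`
and `x ∈ ZMod 2`.  Here `S'` is the first row of `H(∇S)`, i.e. `S'_j = a_{2,2+j}`. -/
theorem statement4 (n : ℕ) (hn : 3 ≤ n) (S : ℕ → ZMod 2)
    (a : ℕ → ℕ → ZMod 2) (ha : a ∈ ST n) (hrow : FirstRow n a S) :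
    rot n a = a ↔
      (rot (n - 3) (Hmap n a) = Hmap n a ∧
        ∃ i, 1 ≤ i ∧ i ≤ n - 2 ∧ ∃ x : ZMod 2,
          S 1 = seqSum (n - 3) (fun j => a 2 (2 + j)) ∧
          S n = seqSum (n - 3) (fun j => a 2 (2 + j)) ∧
          ∀ j, 2 ≤ j → j ≤ n - 1 →
            S j = antider i x (fun j' => a 2 (2 + j')) (j - 1)) := by
  rw [seqSum_inner_second_row ha hrow hn, rot_Hmap_eq_self_iff]
  constructor
  · intro h
    obtain ⟨hSn, hS1⟩ := firstRow_ends_of_rot_eq_self hn ha hrow h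
    have hrot := (rot_eq_self_iff ha).1 h
    exact ⟨fun p q hp hpq hq => hrot p q ⟨by omega, by omega, by omega⟩, 1, le_rfl, by omega,
      S 2, hS1, hSn.trans hS1, fun j hj hjn => antider_inner_second_row ha hrow hj hjn⟩
  · rintro ⟨hH, -, -, -, -, hS1, hSn, -⟩
    exact rot_eq_self_of_interior (by omega) ha hrow hH hS1 (hSn.trans hS1.symm)

end Steinhaus
end

section
/- Let n be a non-negative integer. The set G_R = {(i, n - ⌊n/3⌋) : i ∈ {1,…,⌊n/3⌋ + δ_{1,(n mod 3)}}} is a generating index set of RST(n), the subspace of rotationally symmetric Steinhaus triangles of size n. -/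
open Finset

namespace Steinhaus

/-!
Removing the first row and the two lateral sides of a triangle of size `n` is a linear map
`H : ST(n) → ST(n-3)` sending `RST(n)` to `RST(n-3)`. Conversely `a` is rotationally symmetric
as soon as `H a` is and its first row `S` satisfies `S 1 = S n` and `S 2 = S (n-1) + S n`: the
symmetry of `H a` propagates along both sides of `a`. A triangle is determined by its first row,
and `H a = 0` iff `S` is constant on `[2, n-1]`; for symmetric `a` the boundary relations then
force `S 1 = S n = 0`. Hence `H : RST(n) → RST(n-3)` is onto and its kernel is detected by the
single entry `a 1 j`, for any `2 ≤ j ≤ n-1`. Since `H` moves the column `n - ⌊n/3⌋` of `G_R` one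
row up onto the column `(n-3) - ⌊(n-3)/3⌋`, induction on `n` in steps of three proves the theorem.
-/

variable {n : ℕ} {a b : ℕ → ℕ → ZMod 2}

lemma mem_ST_iff :
    a ∈ ST n ↔ (∀ i j, ¬ InTri n i j → a i j = 0) ∧
      ∀ i j, 2 ≤ i → i ≤ j → j ≤ n → a i j = a (i - 1) (j - 1) + a (i - 1) j := Iff.rfl

lemma mem_RST_iff : a ∈ RST n ↔ a ∈ ST n ∧ rot n a = a := Iff.rfl

lemma eq_of_row_one_eq (ha : a ∈ ST n) (hb : b ∈ ST n)
    (h : ∀ j, 1 ≤ j → j ≤ n → a 1 j = b 1 j) : a = b := by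
  obtain ⟨ha0, ha1⟩ := mem_ST_iff.mp ha
  obtain ⟨hb0, hb1⟩ := mem_ST_iff.mp hb
  funext i
  induction i using Nat.strong_induction_on with
  | _ i ih =>
    funext j
    by_cases hI : InTri n i j
    · obtain ⟨hi, hij, hjn⟩ := hI
      obtain rfl | hi2 : i = 1 ∨ 2 ≤ i := by omega
      · exact h j hij hjn
      · rw [ha1 i j hi2 hij hjn, hb1 i j hi2 hij hjn, ih (i - 1) (by omega)]
    · rw [ha0 i j hI, hb0 i j hI]

def ofRow (n : ℕ) (S : ℕ → ZMod 2) : ℕ → ℕ → ZMod 2 :=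
  fun i j => if InTri n i j then der^[i - 1] S (j - i + 1) else 0

lemma ofRow_firstRow (n : ℕ) (S : ℕ → ZMod 2) : FirstRow n (ofRow n S) S := by
  intro j h1 h2
  simp only [ofRow, if_pos (show InTri n 1 j from ⟨le_rfl, h1, h2⟩), Nat.sub_self,
    Function.iterate_zero_apply, Nat.sub_add_cancel h1]

lemma ofRow_mem (n : ℕ) (S : ℕ → ZMod 2) : ofRow n S ∈ ST n := by
  refine ⟨fun i j h => if_neg h, fun i j h2 hij hjn => ?_⟩
  simp only [ofRow, if_pos (show InTri n i j from ⟨by omega, hij, hjn⟩),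
    if_pos (show InTri n (i - 1) (j - 1) from ⟨by omega, by omega, by omega⟩),
    if_pos (show InTri n (i - 1) j from ⟨by omega, by omega, hjn⟩)]
  obtain ⟨i, rfl⟩ : ∃ k, i = k + 2 := ⟨i - 2, by omega⟩
  rw [show i + 2 - 1 = i + 1 by omega, show i + 1 - 1 = i by omega,
    Function.iterate_succ_apply', show j - 1 - (i + 1) + 1 = j - (i + 2) + 1 by omega,
    show j - (i + 1) + 1 = j - (i + 2) + 1 + 1 by omega]
  rfl

lemma rot_mem (ha : a ∈ ST n) : rot n a ∈ ST n := by
  obtain ⟨ha0, ha1⟩ := mem_ST_iff.mp ha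
  refine ⟨fun i j h => if_neg h, fun i j h2 hij hjn => ?_⟩
  simp only [rot, if_pos (show InTri n i j from ⟨by omega, hij, hjn⟩),
    if_pos (show InTri n (i - 1) (j - 1) from ⟨by omega, by omega, by omega⟩),
    if_pos (show InTri n (i - 1) j from ⟨by omega, by omega, hjn⟩)]
  -- the local rule of `a` at the rotated position `(j-i+2, n-i+2)`
  have h := ha1 (j - i + 2) (n - i + 2) (by omega) (by omega) (by omega)
  rw [show j - i + 2 - 1 = j - i + 1 by omega, show n - i + 2 - 1 = n - i + 1 by omega] at h
  rw [show j - 1 - (i - 1) + 1 = j - i + 1 by omega, show n - (i - 1) + 1 = n - i + 2 by omega,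
    show j - (i - 1) + 1 = j - i + 2 by omega, h]
  grind

lemma apply_eq_of_rot_eq_self (h : rot n a = a) {i j : ℕ} (hI : InTri n i j) :
    a i j = a (j - i + 1) (n - i + 1) := by
  rw [← congrFun (congrFun h i) j, rot, if_pos hI]

lemma rot_eq_self_of_right_edge (ha : a ∈ ST n)
    (h : ∀ j, 1 ≤ j → j ≤ n → a j n = a 1 j) : rot n a = a := by
  refine eq_of_row_one_eq (rot_mem ha) ha fun j h1 h2 => ?_
  rw [rot, if_pos ⟨le_rfl, h1, h2⟩, Nat.sub_add_cancel h1, Nat.sub_add_cancel (by omega)]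
  exact h j h1 h2

lemma row_one_of_mem_RST (hn : 2 ≤ n) (ha : a ∈ RST n) :
    a 1 1 = a 1 n ∧ a 1 2 = a 1 (n - 1) + a 1 n := by
  obtain ⟨⟨-, ha1⟩, hrot⟩ := mem_RST_iff.mp ha
  have h11 := apply_eq_of_rot_eq_self hrot (i := 1) (j := 1) ⟨le_rfl, le_rfl, by omega⟩
  have h12 := apply_eq_of_rot_eq_self hrot (i := 1) (j := 2) ⟨le_rfl, by omega, hn⟩
  simp only [Nat.sub_self, zero_add, Nat.sub_add_cancel (by omega : 1 ≤ n),
    show 2 - 1 + 1 = 2 from rfl] at h11 h12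
  exact ⟨h11, h12.trans (ha1 2 n le_rfl hn le_rfl)⟩

lemma Hmap_apply {i j : ℕ} (hI : InTri (n - 3) i j) : Hmap n a i j = a (1 + i) (2 + j) :=
  if_pos hI

lemma Hmap_mem (ha : a ∈ ST n) : Hmap n a ∈ ST (n - 3) := by
  obtain ⟨-, ha1⟩ := mem_ST_iff.mp ha
  refine ⟨fun i j h => if_neg h, fun i j h2 hij hjn => ?_⟩
  rw [Hmap_apply ⟨by omega, hij, hjn⟩, Hmap_apply ⟨by omega, by omega, by omega⟩,
    Hmap_apply ⟨by omega, by omega, hjn⟩, ha1 _ _ (by omega) (by omega) (by omega)]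
  congr 2 <;> omega

lemma Hmap_mem_RST (ha : a ∈ RST n) : Hmap n a ∈ RST (n - 3) := by
  obtain ⟨haST, hrot⟩ := mem_RST_iff.mp ha
  refine ⟨Hmap_mem haST, rot_eq_self_of_right_edge (Hmap_mem haST) fun j h1 h2 => ?_⟩
  rw [Hmap_apply ⟨h1, h2, le_rfl⟩, Hmap_apply ⟨le_rfl, h1, h2⟩,
    apply_eq_of_rot_eq_self hrot (i := 1 + 1) (j := 2 + j) ⟨by omega, by omega, by omega⟩]
  congr 1 <;> omega

lemma rot_eq_self_of_Hmap (hn : 3 ≤ n) (ha : a ∈ ST n)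
    (hH : rot (n - 3) (Hmap n a) = Hmap n a)
    (h1 : a 1 1 = a 1 n) (h2 : a 1 2 = a 1 (n - 1) + a 1 n) : rot n a = a := by
  obtain ⟨-, ha1⟩ := mem_ST_iff.mp ha
  have row2 : ∀ j, 2 ≤ j → j ≤ n → a 2 j = a 1 (j - 1) + a 1 j :=
    fun j hj hjn => ha1 2 j le_rfl hj hjn
  -- the symmetry of `H a` carries both the left and the right side of `a` to its second row
  have left : ∀ i, 2 ≤ i → i ≤ n - 2 → a i (i + 1) = a 2 (n + 1 - i) := by
    intro i hi hin
    have h := apply_eq_of_rot_eq_self hH (i := i - 1) (j := i - 1) ⟨by omega, le_rfl, by omega⟩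
    rw [Hmap_apply (i := i - 1) (j := i - 1) ⟨by omega, le_rfl, by omega⟩,
      Hmap_apply (i := i - 1 - (i - 1) + 1) (j := n - 3 - (i - 1) + 1)
        ⟨by omega, by omega, by omega⟩] at h
    convert h using 2 <;> omega
  have right : ∀ j, 2 ≤ j → j ≤ n - 2 → a j (n - 1) = a 2 (j + 1) := by
    intro j hj hjn
    have h := apply_eq_of_rot_eq_self hH (i := 1) (j := j - 1) ⟨le_rfl, by omega, by omega⟩
    rw [Hmap_apply (i := 1) (j := j - 1) ⟨le_rfl, by omega, by omega⟩,
      Hmap_apply (i := j - 1 - 1 + 1) (j := n - 3 - 1 + 1) ⟨by omega, by omega, by omega⟩] at h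
    convert h.symm using 2 <;> omega
  have diag : ∀ i, 1 ≤ i → i ≤ n - 1 → a i i = a 1 (n + 1 - i) := by
    intro i hi
    induction i, hi using Nat.le_induction with
    | base => intro; simpa using h1
    | succ i hi ih =>
      intro hin
      rw [ha1 (i + 1) (i + 1) (by omega) le_rfl (by omega), Nat.add_sub_cancel,
        ih (by omega)]
      obtain rfl | hi2 := eq_or_lt_of_le hi
      · rw [show n + 1 - (1 + 1) = n - 1 by omega, show n + 1 - 1 = n by omega, ← h1, h2]
        grind
      · rw [left i hi2 (by omega), row2 _ (by omega) (by omega),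
          show n + 1 - i - 1 = n + 1 - (i + 1) by omega]
        grind
  refine rot_eq_self_of_right_edge ha fun j hj => ?_
  induction j, hj using Nat.le_induction with
  | base => intro; exact h1.symm
  | succ j hj ih =>
    intro hjn
    rw [ha1 (j + 1) n (by omega) hjn le_rfl, Nat.add_sub_cancel, ih (by omega)]
    obtain rfl | hj2 := eq_or_lt_of_le hj
    · rw [h2, h1]
    obtain hjn' | rfl : j ≤ n - 2 ∨ j = n - 1 := by omega
    · rw [right j hj2 hjn', row2 (j + 1) (by omega) (by omega), Nat.add_sub_cancel]
      grind
    · rw [diag (n - 1) (by omega) le_rfl, show n + 1 - (n - 1) = 2 by omega, h2,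
        Nat.sub_add_cancel (by omega)]
      grind

lemma eq_zero_of_Hmap_eq_zero (hn : 3 ≤ n) (ha : a ∈ RST n) (hH : Hmap n a = 0) {j : ℕ}
    (hj : 2 ≤ j) (hjn : j ≤ n - 1) (h0 : a 1 j = 0) : a = 0 := by
  obtain ⟨h11, h12⟩ := row_one_of_mem_RST (by omega) ha
  obtain ⟨⟨-, ha1⟩, -⟩ := mem_RST_iff.mp ha
  -- the second row vanishes, so the first row is constant on `[2, n-1]`
  have hconst : ∀ k, 2 ≤ k → k ≤ n - 1 → a 1 k = a 1 2 := by
    intro k hk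
    induction k, hk using Nat.le_induction with
    | base => intro; rfl
    | succ k hk ih =>
      intro hkn
      have h := congrFun (congrFun hH 1) (k - 1)
      rw [Pi.zero_apply, Pi.zero_apply, Hmap_apply ⟨le_rfl, by omega, by omega⟩,
        ha1 _ _ (by omega) (by omega) (by omega), show 2 + (k - 1) - 1 = k by omega,
        show 2 + (k - 1) = k + 1 by omega, ih (by omega)] at h
      grind
  have hmid : a 1 2 = 0 := by rw [← hconst j hj hjn, h0]
  have hlast : a 1 n = 0 := by
    rw [hconst (n - 1) (by omega) le_rfl, hmid] at h12
    grind
  refine eq_of_row_one_eq ha.1 (zero_mem _) fun k hk hkn => ?_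
  obtain rfl | hk2 := eq_or_lt_of_le hk
  · rw [h11, hlast]; rfl
  obtain hkn' | rfl := lt_or_eq_of_le hkn
  · rw [hconst k hk2 (by omega), hmid]; rfl
  · exact hlast

/-- Consecutive inner terms differ by `T`, so that the second row of `ofRow n (extRow n T x)`
is `T`; the boundary terms are chosen to satisfy the relations of `row_one_of_mem_RST`. -/
def extRow (n : ℕ) (T : ℕ → ZMod 2) (x : ZMod 2) : ℕ → ZMod 2 :=
  fun j => if j = 1 ∨ j = n then ∑ k ∈ Icc 1 (n - 3), T k else x + ∑ k ∈ Icc 1 (j - 2), T k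

lemma extRow_of_ne {T : ℕ → ZMod 2} {x : ZMod 2} {j : ℕ} (h1 : j ≠ 1) (hn : j ≠ n) :
    extRow n T x j = x + ∑ k ∈ Icc 1 (j - 2), T k :=
  if_neg (by omega)

lemma exists_Hmap_eq (hn : 3 ≤ n) (hb : b ∈ RST (n - 3)) {j : ℕ} (hj : 2 ≤ j)
    (hjn : j ≤ n - 1) (y : ZMod 2) : ∃ a ∈ RST n, Hmap n a = b ∧ a 1 j = y := by
  obtain ⟨hbST, hbrot⟩ := mem_RST_iff.mp hb
  set x := y + ∑ k ∈ Icc 1 (j - 2), b 1 k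
  have hS := ofRow_firstRow n (extRow n (b 1) x)
  have ha := ofRow_mem n (extRow n (b 1) x)
  have hH : Hmap n (ofRow n (extRow n (b 1) x)) = b := by
    refine eq_of_row_one_eq (Hmap_mem ha) hbST fun k hk hkn => ?_
    rw [Hmap_apply ⟨le_rfl, hk, hkn⟩, ha.2 _ _ (by omega) (by omega) (by omega),
      hS _ (by omega) (by omega), hS _ (by omega) (by omega), show 2 + k - 1 = k + 1 by omega,
      extRow_of_ne (j := k + 1) (by omega) (by omega),
      extRow_of_ne (j := 2 + k) (by omega) (by omega), show k + 1 - 2 = k - 1 by omega,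
      show 2 + k - 2 = k - 1 + 1 by omega, sum_Icc_succ_top (by omega), Nat.sub_add_cancel hk]
    grind
  refine ⟨_, ⟨ha, rot_eq_self_of_Hmap hn ha (by rwa [hH]) ?_ ?_⟩, hH, ?_⟩
  · rw [hS 1 le_rfl (by omega), hS n (by omega) le_rfl]
    simp [extRow]
  · rw [hS 2 one_le_two (by omega), hS (n - 1) (by omega) (by omega), hS n (by omega) le_rfl,
      extRow_of_ne (j := 2) (by omega) (by omega), extRow_of_ne (j := n - 1) (by omega) (by omega),
      show n - 1 - 2 = n - 3 by omega]
    simp only [extRow, or_true, if_true, Nat.sub_self, Icc_eq_empty_of_lt one_pos, sum_empty]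
    grind
  · rw [hS j (by omega) (by omega), extRow_of_ne (j := j) (by omega) (by omega)]
    grind

/-- `G_R = {(i, genCol n) | 1 ≤ i ≤ genLen n}`. -/
def genCol (n : ℕ) : ℕ := n - n / 3

def genLen (n : ℕ) : ℕ := n / 3 + if n % 3 = 1 then 1 else 0

lemma genLen_of_three_le (hn : 3 ≤ n) : genLen n = genLen (n - 3) + 1 := by
  unfold genLen; split_ifs <;> omega

lemma inTri_genCol {i : ℕ} (h1 : 1 ≤ i) (h2 : i ≤ genLen n) : InTri n i (genCol n) := by
  unfold genLen at h2; unfold genCol; split_ifs at h2 <;> exact ⟨h1, by omega, by omega⟩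

lemma Hmap_apply_genCol (hn : 3 ≤ n) {i : ℕ} (h1 : 1 ≤ i) (h2 : i ≤ genLen (n - 3)) :
    Hmap n a i (genCol (n - 3)) = a (i + 1) (genCol n) := by
  rw [Hmap_apply (inTri_genCol h1 h2)]
  unfold genCol
  congr 1 <;> omega

lemma eq_zero_of_genCol (n : ℕ) : ∀ a ∈ RST n,
    (∀ i, 1 ≤ i → i ≤ genLen n → a i (genCol n) = 0) → a = 0 := by
  refine Nat.strong_induction_on n fun n ih a ha h0 => ?_
  obtain hn | hn := lt_or_ge n 3
  · refine eq_of_row_one_eq ha.1 (zero_mem _) fun j hj hjn => ?_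
    interval_cases n
    · omega
    · obtain rfl : j = 1 := by omega
      exact h0 1 le_rfl (by decide)
    · obtain ⟨h11, h12⟩ := row_one_of_mem_RST le_rfl ha
      have h : a 1 2 = 0 := by grind
      interval_cases j
      · exact h11.trans h
      · exact h
  · have hH : Hmap n a = 0 := ih (n - 3) (by omega) _ (Hmap_mem_RST ha) fun i h1 h2 => by
      rw [Hmap_apply_genCol hn h1 h2]
      exact h0 (i + 1) (by omega) (by rw [genLen_of_three_le hn]; omega)
    exact eq_zero_of_Hmap_eq_zero hn ha hH (by unfold genCol; omega)
      (by unfold genCol; omega) (h0 1 le_rfl (by rw [genLen_of_three_le hn]; omega))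

lemma exists_genCol_eq (n : ℕ) :
    ∀ g : ℕ → ZMod 2, ∃ a ∈ RST n, ∀ i, 1 ≤ i → i ≤ genLen n → a i (genCol n) = g i := by
  refine Nat.strong_induction_on n fun n ih g => ?_
  obtain hn | hn := lt_or_ge n 3
  · interval_cases n
    · exact ⟨0, zero_mem _, fun i h1 h2 => by simp [genLen] at h2; omega⟩
    · refine ⟨ofRow 1 fun _ => g 1, ⟨ofRow_mem _ _, ?_⟩, fun i h1 h2 => ?_⟩
      · refine rot_eq_self_of_right_edge (ofRow_mem _ _) fun j h1 h2 => ?_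
        obtain rfl : j = 1 := by omega
        rfl
      · obtain rfl : i = 1 := by simp [genLen] at h2; omega
        exact ofRow_firstRow 1 _ 1 le_rfl le_rfl
    · exact ⟨0, zero_mem _, fun i h1 h2 => by simp [genLen] at h2; omega⟩
  · obtain ⟨b, hb, hbg⟩ := ih (n - 3) (by omega) fun i => g (i + 1)
    obtain ⟨a, ha, hH, ha1⟩ := exists_Hmap_eq hn hb (j := genCol n) (by unfold genCol; omega)
      (by unfold genCol; omega) (g 1)
    refine ⟨a, ha, fun i h1 h2 => ?_⟩
    obtain rfl | hi := eq_or_lt_of_le h1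
    · exact ha1
    · rw [genLen_of_three_le hn] at h2
      have h := Hmap_apply_genCol (a := a) hn (i := i - 1) (by omega) (by omega)
      rw [hH, hbg (i - 1) (by omega) (by omega), Nat.sub_add_cancel h1] at h
      exact h.symm

lemma isGenIndexSet_image_column {V : Submodule (ZMod 2) (ℕ → ℕ → ZMod 2)} {m j : ℕ}
    (hG : ∀ i, 1 ≤ i → i ≤ m → InTri n i j)
    (hinj : ∀ a ∈ V, (∀ i, 1 ≤ i → i ≤ m → a i j = 0) → a = 0)
    (hsurj : ∀ g : ℕ → ZMod 2, ∃ a ∈ V, ∀ i, 1 ≤ i → i ≤ m → a i j = g i) :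
    IsGenIndexSet n V ((fun i => (i, j)) '' Set.Icc 1 m) := by
  refine ⟨fun p ⟨i, hi, hp⟩ => hp ▸ hG i hi.1 hi.2, ?_, fun g => ?_⟩
  · refine (injective_iff_map_eq_zero (proj V _)).2 fun a ha => Subtype.ext ?_
    exact hinj a a.2 fun i h1 h2 => congrFun ha ⟨(i, j), i, ⟨h1, h2⟩, rfl⟩
  · classical
    obtain ⟨a, ha, hag⟩ := hsurj fun i =>
      if h : i ∈ Set.Icc 1 m then g ⟨(i, j), i, h, rfl⟩ else 0
    refine ⟨⟨a, ha⟩, funext fun ⟨p, i, hi, hp⟩ => ?_⟩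
    subst hp
    simp only [proj, LinearMap.coe_mk, AddHom.coe_mk, hag i hi.1 hi.2, dif_pos hi]

/-- Corollary 2. The set
`G_R = {(i, n - ⌊n/3⌋) : 1 ≤ i ≤ ⌊n/3⌋ + δ_{1,(n mod 3)}}` is a generating index
set of `RST(n)`. -/
theorem statement5 (n : ℕ) :
    IsGenIndexSet n (RST n)
      ((fun i => (i, n - n / 3)) ''
        Set.Icc 1 (n / 3 + if n % 3 = 1 then 1 else 0)) :=
  isGenIndexSet_image_column (fun _ => inTri_genCol) (eq_zero_of_genCol n) (exists_genCol_eq n)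

end Steinhaus
end

section
/- A sequence S over Z/2Z of length n is symmetric if and only if its derived sequence ∂S is symmetric and σ₂(∂S) = 0. -/
open Finset

/-
Over `ZMod 2`, `S` is symmetric iff its defect `d j = S j + S (n + 1 - j)` vanishes on `[1, n]`.
Symmetry of `∂S` says exactly `d j = d (j + 1)`, i.e. that `d` is constant, while `σ₂(∂S)`
telescopes to `S 1 + S n = d 1`.
-/

theorem forall_mem_Icc_eq_iff {α : Type*} {T : ℕ → α} {m n : ℕ} (hmn : m ≤ n) (c : α) :
    (∀ j ∈ Icc m n, T j = c) ↔ (∀ j ∈ Ico m n, T j = T (j + 1)) ∧ T m = c := by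
  constructor
  · intro h
    refine ⟨fun j hj => ?_, h m (left_mem_Icc.2 hmn)⟩
    rw [mem_Ico] at hj
    rw [h j (mem_Icc.2 ⟨hj.1, hj.2.le⟩), h (j + 1) (mem_Icc.2 ⟨by omega, hj.2⟩)]
  · rintro ⟨hstep, hm⟩ j hj
    rw [mem_Icc] at hj
    induction j, hj.1 using Nat.le_induction with
    | base => exact hm
    | succ j hmj ih => rw [← hstep j (mem_Ico.2 ⟨hmj, hj.2⟩), ih ⟨hmj, by omega⟩]

namespace Steinhaus

theorem symmSeq_zero {S : ℕ → ZMod 2} : SymmSeq 0 S :=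
  fun _ hj1 hj0 => absurd (hj1.trans hj0) (by decide)

theorem der_eq_sub (S : ℕ → ZMod 2) (j : ℕ) : der S j = S (j + 1) - S j := by
  rw [der, CharTwo.sub_eq_add, add_comm]

def symmDefect (n : ℕ) (S : ℕ → ZMod 2) (j : ℕ) : ZMod 2 := S j + S (n - j + 1)

theorem symmSeq_iff_symmDefect_eq_zero (n : ℕ) (S : ℕ → ZMod 2) :
    SymmSeq n S ↔ ∀ j ∈ Icc 1 n, symmDefect n S j = 0 := by
  simp only [SymmSeq, symmDefect, CharTwo.add_eq_zero, mem_Icc, and_imp, eq_comm]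

theorem symmSeq_der_iff (n : ℕ) (S : ℕ → ZMod 2) :
    SymmSeq (n - 1) (der S) ↔
      ∀ j ∈ Ico 1 n, symmDefect n S j = symmDefect n S (j + 1) := by
  refine forall_congr' fun j => ?_
  rw [mem_Ico, and_imp]
  refine imp_congr_right fun hj1 => imp_congr_ctx (by omega) fun hjn => ?_
  rw [der, der, symmDefect, symmDefect, show n - 1 - j + 1 = n - j by omega,
    show n - (j + 1) + 1 = n - j by omega]
  -- in characteristic 2 both sides say that the four terms sum to zero
  grind

theorem seqSum_der {n : ℕ} (hn : 1 ≤ n) (S : ℕ → ZMod 2) :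
    seqSum (n - 1) (der S) = S 1 + S n := by
  obtain ⟨m, rfl⟩ := Nat.exists_eq_add_of_le hn
  rw [seqSum, Nat.add_sub_cancel_left, ← Ico_add_one_right_eq_Icc, add_comm m 1]
  simp_rw [der_eq_sub]
  rw [sum_Ico_sub S (by omega), CharTwo.sub_eq_add, add_comm]

/-- Proposition 1. A sequence `S` of length `n` over `ZMod 2`
is symmetric iff `∂S` is symmetric and `σ₂(∂S) = 0`. -/
theorem statement8 (n : ℕ) (S : ℕ → ZMod 2) :
    SymmSeq n S ↔ SymmSeq (n - 1) (der S) ∧ seqSum (n - 1) (der S) = 0 := by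
  rcases Nat.eq_zero_or_pos n with rfl | hn
  · exact iff_of_true symmSeq_zero ⟨symmSeq_zero, by simp [seqSum]⟩
  have hdefect_one : symmDefect n S 1 = S 1 + S n := by
    rw [symmDefect, Nat.sub_add_cancel hn]
  rw [symmSeq_iff_symmDefect_eq_zero, symmSeq_der_iff, seqSum_der hn, ← hdefect_one]
  exact forall_mem_Icc_eq_iff hn 0

end Steinhaus
end

section
/- A binary Steinhaus triangle (a_{i,j})_{1≤i≤j≤n} of size n is horizontally symmetric if and only if a_{n-2i, n-i} = 0 for all i ∈ {0, 1, …, ⌊n/2⌋ - 1}. -/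
open Finset

namespace Steinhaus

/-!
Row `i + 1` of a Steinhaus triangle is the derived sequence of row `i`. A sequence is symmetric
exactly when its derived sequence is symmetric and, if its length is even, its two middle terms
agree, i.e. the middle term of the derived sequence vanishes. The entries `a_{n-2i, n-i}` are the
middle terms of the rows of odd length `2i + 1`, so descending induction on the rows, starting
from the single entry of the last one, gives both directions.
-/

def IsSymmOn {α : Type*} (x : ℕ → α) (lo hi : ℕ) : Prop :=
  ∀ k, lo ≤ k → k ≤ hi → x (hi - k + lo) = x k

section Sequence

variable {x : ℕ → ZMod 2} {lo hi : ℕ}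

lemma add_mirror_eq_of_isSymmOn_der (hd : IsSymmOn (der x) lo (hi - 1)) :
    ∀ k, lo ≤ k → k ≤ hi → x k + x (hi - k + lo) = x lo + x hi := by
  intro k hk
  induction k, hk using Nat.le_induction with
  | base => intro _; rw [show hi - lo + lo = hi by omega]
  | succ k hk ih =>
    intro hkhi
    have hmirror := hd k hk (by omega)
    simp only [der, show hi - 1 - k + lo + 1 = hi - k + lo by omega] at hmirror
    rw [← ih (by omega), show hi - (k + 1) + lo = hi - 1 - k + lo by omega]
    linear_combination hmirror + CharTwo.two_eq_zero (R := ZMod 2) * (x (k + 1) - x (hi - k + lo))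

lemma isSymmOn_of_der (hd : IsSymmOn (der x) lo (hi - 1))
    (hmid : Odd (lo + hi) → der x ((lo + hi) / 2) = 0) : IsSymmOn x lo hi := by
  have hconst := add_mirror_eq_of_isSymmOn_der hd
  intro k hlo hhi
  have hends : x lo + x hi = 0 := by
    rcases Nat.even_or_odd (lo + hi) with ⟨m, hm⟩ | hodd
    · rw [← hconst m (by omega) (by omega), show hi - m + lo = m by omega,
        CharTwo.add_self_eq_zero]
    · rw [← hconst ((lo + hi) / 2) (by omega) (by omega), ← hmid hodd, der]
      obtain ⟨m, hm⟩ := hodd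
      congr 2
      omega
  linear_combination hconst k hlo hhi + hends - CharTwo.two_eq_zero (R := ZMod 2) * x k

lemma der_middle_eq_zero_of_isSymmOn (hx : IsSymmOn x lo hi) (hle : lo ≤ hi) (hodd : Odd (lo + hi)) :
    der x ((lo + hi) / 2) = 0 := by
  obtain ⟨m, hm⟩ := hodd
  have hmid := hx m (by omega) (by omega)
  rw [show hi - m + lo = m + 1 by omega] at hmid
  rw [der, show (lo + hi) / 2 = m by omega, hmid, CharTwo.add_self_eq_zero]

end Sequence

section Triangle

variable {n : ℕ} {a : ℕ → ℕ → ZMod 2}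

lemma der_row (ha : a ∈ ST n) {i k : ℕ} (hi : 1 ≤ i) (hik : i ≤ k) (hkn : k < n) :
    der (a i) k = a (i + 1) (k + 1) :=
  (ha.2 (i + 1) (k + 1) (by omega) (by omega) (by omega)).symm

lemma hrefl_eq_self_iff (ha : a ∈ ST n) :
    hrefl n a = a ↔ ∀ i, 1 ≤ i → IsSymmOn (a i) i n := by
  constructor
  · intro h i hi k hik hkn
    simpa [hrefl, InTri, hi, hik, hkn] using congrFun (congrFun h i) k
  · intro h
    funext i j
    unfold hrefl
    split_ifs with hij
    · exact h i hij.1 j hij.2.1 hij.2.2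
    · exact (ha.1 i j hij).symm

lemma isSymmOn_der_row (ha : a ∈ ST n) {i : ℕ} (hi : 1 ≤ i)
    (hsucc : IsSymmOn (a (i + 1)) (i + 1) n) : IsSymmOn (der (a i)) i (n - 1) := by
  intro k hik hkn
  rw [der_row ha hi hik (by omega), der_row ha hi (by omega) (by omega),
    show n - 1 - k + i + 1 = n - (k + 1) + (i + 1) by omega, hsucc (k + 1) (by omega) (by omega)]

lemma isSymmOn_row_of_middle_eq_zero (ha : a ∈ ST n) (hz : ∀ i, i < n / 2 → a (n - 2 * i) (n - i) = 0) :
    ∀ i, 1 ≤ i → IsSymmOn (a i) i n := by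
  intro i hi
  obtain hin | hni := le_or_gt i n
  · revert hi
    induction hin using Nat.decreasingInduction with
    | self => intro _ k hk hkn; rw [show n - k + n = k by omega]
    | of_succ i hin ih =>
      intro hi
      refine isSymmOn_of_der (isSymmOn_der_row ha hi (ih (by omega))) fun ⟨m, hm⟩ => ?_
      have hmid := hz (m - i) (by omega)
      rwa [der_row ha hi (by omega) (by omega), show (i + n) / 2 + 1 = n - (m - i) by omega,
        show i + 1 = n - 2 * (m - i) by omega]
  · intro k _ _
    omega

end Triangle

/-- Proposition 11. A Steinhaus triangle `(a_{i,j})` of size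
`n` is horizontally symmetric iff `a_{n-2i, n-i} = 0` for all
`i ∈ {0,…,⌊n/2⌋ - 1}`. -/
theorem statement10 (n : ℕ) (a : ℕ → ℕ → ZMod 2) (ha : a ∈ ST n) :
    hrefl n a = a ↔ ∀ i, i < n / 2 → a (n - 2 * i) (n - i) = 0 := by
  rw [hrefl_eq_self_iff ha]
  refine ⟨fun hrows i hi => ?_, isSymmOn_row_of_middle_eq_zero ha⟩
  have hodd : Odd (n - 2 * i - 1 + n) := ⟨n - i - 1, by omega⟩
  have hmid := der_middle_eq_zero_of_isSymmOn (hrows (n - 2 * i - 1) (by omega)) (by omega) hodd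
  rwa [der_row ha (by omega) (by omega) (by omega),
    show (n - 2 * i - 1 + n) / 2 + 1 = n - i by omega,
    show n - 2 * i - 1 + 1 = n - 2 * i by omega] at hmid

end Steinhaus
end

section
/- Let n be a non-negative integer. The set {∇_1, …, ∇_{⌈n/2⌉}} is a basis of HST(n), where ∇_k = ∇(bs_n(n-2k, -k)), whose (i,j)-entry equals C(-k + j - i, n - 2k + 1 - i) mod 2 for 1 ≤ i ≤ j ≤ n, for all k ∈ {1,…,⌊n/2⌋}, and, when n is odd, ∇_{(n+1)/2} = ∇((1)_n) with (1)_n the constant sequence of length n all of whose terms are 1. -/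
open Finset

namespace Steinhaus

/-!
A Steinhaus triangle is determined by its first row, and it is horizontally symmetric exactly
when its first row is a palindrome, so reading off the first `⌈n/2⌉` entries of the first row
embeds `HST(n)` into `(ZMod 2)^⌈n/2⌉`. Under this embedding `∇_1, …, ∇_⌈n/2⌉` give a
unitriangular matrix (`C(-1, m) ≡ 1` and `C(a, m) = 0` for `0 ≤ a < m`), hence a basis. The
first row of `∇_k` is a palindrome by the reflection `C(a, b) = ± C(b - 1 - a, b)`, and the entry
formula holds because Pascal's rule for `C` is the Steinhaus rule.
-/

theorem ibinom_natCast_eq_choose (a : ℤ) (b : ℕ) : ibinom a b = Ring.choose a b := by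
  rcases le_or_gt 0 a with ha | ha
  · lift a to ℕ using ha
    simp [ibinom, Ring.choose_natCast]
  · obtain ⟨r, rfl⟩ : ∃ r : ℕ, a = -(r : ℤ) := ⟨a.natAbs, by omega⟩
    have hr : (r : ℤ) + b - 1 = ((r + b - 1 : ℕ) : ℤ) := by omega
    rw [Ring.choose_neg, hr, Ring.choose_natCast, ibinom, if_neg (by omega), if_neg (by omega),
      Int.negOnePow_def, Units.smul_def]
    simp [show (b + r : ℤ).toNat - 1 = r + b - 1 by omega]

theorem ibinom_of_neg_right (a : ℤ) {b : ℤ} (hb : b < 0) : ibinom a b = 0 := if_pos hb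

theorem ibinom_zero_right (a : ℤ) : ibinom a 0 = 1 := by
  simpa using ibinom_natCast_eq_choose a 0

theorem ibinom_pascal (a b : ℤ) : ibinom a b = ibinom (a - 1) (b - 1) + ibinom (a - 1) b := by
  rcases lt_trichotomy b 0 with hb | rfl | hb
  · rw [ibinom_of_neg_right _ hb, ibinom_of_neg_right _ hb, ibinom_of_neg_right _ (by omega)]; rfl
  · rw [ibinom_zero_right, ibinom_zero_right, ibinom_of_neg_right _ (by omega), zero_add]
  · obtain ⟨k, rfl⟩ : ∃ k : ℕ, b = k + 1 := ⟨b.toNat - 1, by omega⟩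
    have h := Ring.choose_succ_succ (a - 1) k
    rw [sub_add_cancel] at h
    rw [add_sub_cancel_right, ← Nat.cast_succ]
    simp only [ibinom_natCast_eq_choose, h]

theorem ibinom_sub_one_sub (a b : ℤ) : ibinom (b - 1 - a) b = (-1) ^ b.toNat * ibinom a b := by
  rcases lt_or_ge b 0 with hb | hb
  · simp [ibinom_of_neg_right _ hb]
  · lift b to ℕ using hb
    rw [ibinom_natCast_eq_choose, ibinom_natCast_eq_choose,
      show (b : ℤ) - 1 - a = -(a - b + 1) by ring, Ring.choose_neg, Int.negOnePow_def, Units.smul_def, show a - b + 1 + b - 1 = a by ring]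
    simp

theorem ibinom_sub_one_sub_zmodTwo (a b : ℤ) :
    ((ibinom (b - 1 - a) b : ℤ) : ZMod 2) = ibinom a b := by
  rw [ibinom_sub_one_sub]
  push_cast
  rw [CharTwo.neg_eq, one_pow, one_mul]

theorem ibinom_neg_one {b : ℤ} (hb : 0 ≤ b) : ibinom (-1) b = (-1) ^ b.toNat := by
  lift b to ℕ using hb
  simpa [ibinom_natCast_eq_choose, Ring.choose_natCast] using ibinom_sub_one_sub b b

theorem ibinom_eq_zero_of_lt {a b : ℤ} (ha : 0 ≤ a) (hab : a < b) : ibinom a b = 0 := by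
  lift b to ℕ using ha.trans hab.le
  lift a to ℕ using ha
  rw [ibinom_natCast_eq_choose, Ring.choose_natCast, Nat.choose_eq_zero_of_lt (by omega),
    Nat.cast_zero]

theorem bseq_symmSeq (n : ℕ) {k l : ℤ} (h : k = n + 2 * l) : SymmSeq n (bseq k l) := by
  intro j hj hjn
  rw [bseq, bseq, ← ibinom_sub_one_sub_zmodTwo]
  congr 2
  push_cast [Nat.cast_sub hjn]
  omega

theorem bseq_eq_one {k l : ℤ} {j : ℕ} (hk : 0 ≤ k) (hj : l + j = 0) : bseq k l j = 1 := by
  rw [bseq, show l + j - 1 = -1 by omega, ibinom_neg_one hk]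
  push_cast
  rw [CharTwo.neg_eq, one_pow]

theorem bseq_eq_zero {k l : ℤ} {j : ℕ} (h1 : 1 ≤ l + j) (h2 : l + j ≤ k) : bseq k l j = 0 := by
  rw [bseq, ibinom_eq_zero_of_lt (by omega) (by omega), Int.cast_zero]

theorem FirstRow.symmSeq {n : ℕ} {a : ℕ → ℕ → ZMod 2} {S : ℕ → ZMod 2} (h : FirstRow n a S)
    (hS : SymmSeq n S) : SymmSeq n (a 1) := fun j hj hjn => by
  rw [h j hj hjn, h (n - j + 1) (by omega) (by omega), hS j hj hjn]

theorem eq_of_mem_ST_of_firstRow_s12 {n : ℕ} {a g : ℕ → ℕ → ZMod 2} (ha : a ∈ ST n)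
    (hg : ∀ i j, 2 ≤ i → i ≤ j → j ≤ n → g i j = g (i - 1) (j - 1) + g (i - 1) j)
    (hrow : FirstRow n a (g 1)) {i j : ℕ} (hij : InTri n i j) : a i j = g i j := by
  obtain ⟨hi, hij, hjn⟩ := hij
  induction i, hi using Nat.le_induction generalizing j with
  | base => exact hrow j (by omega) hjn
  | succ i hi ih =>
    rw [ha.2 (i + 1) j (by omega) hij hjn, hg (i + 1) j (by omega) hij hjn, Nat.add_sub_cancel,
      ih (by omega) (by omega), ih (by omega) hjn]

theorem ST_ext {n : ℕ} {a b : ℕ → ℕ → ZMod 2} (ha : a ∈ ST n) (hb : b ∈ ST n)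
    (h : FirstRow n a (b 1)) : a = b := by
  funext i j
  by_cases hij : InTri n i j
  · exact eq_of_mem_ST_of_firstRow_s12 ha hb.2 h hij
  · rw [ha.1 i j hij, hb.1 i j hij]

theorem eq_ibinom_of_firstRow_bseq {n : ℕ} {a : ℕ → ℕ → ZMod 2} (ha : a ∈ ST n) {k l : ℤ}
    (hrow : FirstRow n a (bseq k l)) {i j : ℕ} (hij : InTri n i j) :
    a i j = ((ibinom (l + j - i) (k + 1 - i) : ℤ) : ZMod 2) := by
  refine eq_of_mem_ST_of_firstRow_s12 (g := fun i j => ((ibinom (l + j - i) (k + 1 - i) : ℤ) : ZMod 2))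
    ha (fun i j hi hij hjn => ?_) (fun j hj hjn => ?_) hij
  · have h := ibinom_pascal (l + j - i + 1) (k + 1 - i + 1)
    push_cast [Nat.cast_sub (by omega : 1 ≤ i), Nat.cast_sub (by omega : 1 ≤ j)]
    rw [show l + (j - 1) - (i - 1) = l + j - i by ring,
      show k + 1 - (i - 1) = k + 1 - i + 1 by ring, show l + j - (i - 1) = l + j - i + 1 by ring, h, add_sub_cancel_right, add_sub_cancel_right]
    push_cast
    rw [add_left_comm, CharTwo.add_self_eq_zero, add_zero]
  · rw [hrow j hj hjn, bseq]
    push_cast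
    ring_nf

theorem hrefl_mem_ST {n : ℕ} {a : ℕ → ℕ → ZMod 2} (ha : a ∈ ST n) : hrefl n a ∈ ST n := by
  refine ⟨fun i j h => if_neg h, fun i j hi hij hjn => ?_⟩
  simp only [hrefl, if_pos (show InTri n i j from ⟨by omega, hij, hjn⟩),
    if_pos (show InTri n (i - 1) (j - 1) from ⟨by omega, by omega, by omega⟩),
    if_pos (show InTri n (i - 1) j from ⟨by omega, by omega, hjn⟩)]
  rw [ha.2 i (n - j + i) hi (by omega) (by omega), show n - (j - 1) + (i - 1) = n - j + i by omega,
    show n - j + (i - 1) = n - j + i - 1 by omega, add_comm]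

theorem mem_HST_of_symmSeq {n : ℕ} {a : ℕ → ℕ → ZMod 2} (ha : a ∈ ST n) (hs : SymmSeq n (a 1)) :
    a ∈ HST n :=
  ⟨ha, ST_ext (hrefl_mem_ST ha) ha fun j hj hjn => (if_pos ⟨le_rfl, hj, hjn⟩).trans (hs j hj hjn)⟩

theorem symmSeq_of_mem_HST {n : ℕ} {a : ℕ → ℕ → ZMod 2} (ha : a ∈ HST n) : SymmSeq n (a 1) :=
  fun j hj hjn => by
    have h := congrFun (congrFun ha.2 1) (n - j + 1)
    rw [hrefl, if_pos ⟨le_rfl, by omega, by omega⟩, show n - (n - j + 1) + 1 = j by omega] at h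
    exact h.symm

theorem exists_basis_of_injective_of_isUnit_det {K V ι : Type*} [Field K] [AddCommGroup V]
    [Module K V] [Fintype ι] [DecidableEq ι] {φ : V →ₗ[K] (ι → K)} (hφ : Function.Injective φ)
    (v : ι → V) (hv : IsUnit (Matrix.of fun k => φ (v k)).det) :
    ∃ b : Module.Basis ι K V, ⇑b = v := by
  have hli : LinearIndependent K v :=
    .of_comp φ (Matrix.linearIndependent_rows_iff_isUnit.mpr
      ((Matrix.isUnit_iff_isUnit_det _).mpr hv))
  have : Module.Finite K V := .of_injective φ hφ
  have hcard : Fintype.card ι = Module.finrank K V :=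
    le_antisymm hli.fintype_card_le_finrank (by simpa using φ.finrank_le_finrank_of_injective hφ)
  exact ⟨basisOfLinearIndependentOfCardEqFinrank' v hli hcard,
    coe_basisOfLinearIndependentOfCardEqFinrank' v hli hcard⟩

def firstHalfRow (n : ℕ) : HST n →ₗ[ZMod 2] (Fin ((n + 1) / 2) → ZMod 2) where
  toFun a j := (a : ℕ → ℕ → ZMod 2) 1 (j + 1)
  map_add' _ _ := rfl
  map_smul' _ _ := rfl

theorem firstHalfRow_injective (n : ℕ) : Function.Injective (firstHalfRow n) := by
  rw [← LinearMap.ker_eq_bot, LinearMap.ker_eq_bot']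
  intro a ha
  have hhalf : ∀ j, 1 ≤ j → j ≤ (n + 1) / 2 → (a : ℕ → ℕ → ZMod 2) 1 j = 0 := fun j hj hjm => by
    simpa [firstHalfRow, Nat.sub_add_cancel hj] using congrFun ha ⟨j - 1, by omega⟩
  have hrow : FirstRow n a ((0 : ℕ → ℕ → ZMod 2) 1) := fun j hj hjn => by
    rcases le_or_gt j ((n + 1) / 2) with hjm | hjm
    · exact hhalf j hj hjm
    · rw [← symmSeq_of_mem_HST a.2 j hj hjn]
      exact hhalf _ (by omega) (by omega)
  exact Subtype.ext (ST_ext a.2.1 (zero_mem _) hrow)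

theorem exists_basis_HST_of_unitriangular (n : ℕ) (v : ℕ → ℕ → ℕ → ZMod 2)
    (hv : ∀ k, 1 ≤ k → k ≤ (n + 1) / 2 → v k ∈ HST n)
    (hdiag : ∀ k, 1 ≤ k → k ≤ (n + 1) / 2 → v k 1 k = 1)
    (hzero : ∀ k, 1 ≤ k → k ≤ (n + 1) / 2 → ∀ j, k < j → j ≤ (n + 1) / 2 → v k 1 j = 0) :
    ∃ b : Module.Basis (Fin ((n + 1) / 2)) (ZMod 2) (HST n),
      ∀ k : Fin ((n + 1) / 2), (b k : ℕ → ℕ → ZMod 2) = v (k + 1) := by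
  let w : Fin ((n + 1) / 2) → HST n := fun k => ⟨v (k + 1), hv _ (by omega) (by omega)⟩
  have hlower : (Matrix.of fun k => firstHalfRow n (w k)).IsLowerTriangular :=
    fun k j hkj => hzero _ (by omega) (by omega) _ (by simpa using hkj) (by omega)
  have hdet : (Matrix.of fun k => firstHalfRow n (w k)).det = 1 := by
    rw [Matrix.det_of_isLowerTriangular _ hlower]
    exact Finset.prod_eq_one fun k _ => hdiag _ (by omega) (by omega)
  obtain ⟨b, hb⟩ := exists_basis_of_injective_of_isUnit_det (firstHalfRow_injective n) w
    (hdet ▸ isUnit_one)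
  exact ⟨b, fun k => by rw [hb]⟩

/-- `T k` stands for `∇_k`, given by its membership in `ST n` and its first row. -/
theorem statement12 (n : ℕ) (T : ℕ → ℕ → ℕ → ZMod 2)
    (hT : ∀ k, 1 ≤ k → k ≤ n / 2 →
      T k ∈ ST n ∧ FirstRow n (T k) (bseq ((n : ℤ) - 2 * (k : ℤ)) (-(k : ℤ))))
    (hodd : n % 2 = 1 →
      T ((n + 1) / 2) ∈ ST n ∧ FirstRow n (T ((n + 1) / 2)) (fun _ => 1)) :
    (∃ b : Module.Basis (Fin ((n + 1) / 2)) (ZMod 2) (HST n),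
      ∀ k : Fin ((n + 1) / 2), (b k : ℕ → ℕ → ZMod 2) = T ((k : ℕ) + 1)) ∧
    ∀ k, 1 ≤ k → k ≤ n / 2 → ∀ i j, 1 ≤ i → i ≤ j → j ≤ n →
      T k i j = ((ibinom (-(k : ℤ) + (j : ℤ) - (i : ℤ))
        ((n : ℤ) - 2 * (k : ℤ) + 1 - (i : ℤ)) : ℤ) : ZMod 2) := by
  have hunitri : ∀ k, 1 ≤ k → k ≤ (n + 1) / 2 → T k ∈ HST n ∧ T k 1 k = 1 ∧
      ∀ j, k < j → j ≤ (n + 1) / 2 → T k 1 j = 0 := by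
    intro k hk hkm
    by_cases hkn : k ≤ n / 2
    · obtain ⟨hST, hrow⟩ := hT k hk hkn
      refine ⟨mem_HST_of_symmSeq hST (hrow.symmSeq (bseq_symmSeq n (by ring))), ?_, ?_⟩
      · rw [hrow k hk (by omega), bseq_eq_one (by omega) (by ring)]
      · intro j hkj hjm
        rw [hrow j (by omega) (by omega), bseq_eq_zero (by omega) (by omega)]
    · obtain rfl : k = (n + 1) / 2 := by omega
      obtain ⟨hST, hrow⟩ := hodd (by omega)
      exact ⟨mem_HST_of_symmSeq hST (hrow.symmSeq fun _ _ _ => rfl), hrow _ hk (by omega),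
        fun j hkj hjm => absurd hjm (by omega)⟩
  refine ⟨exists_basis_HST_of_unitriangular n T (fun k hk hkm => (hunitri k hk hkm).1)
    (fun k hk hkm => (hunitri k hk hkm).2.1) (fun k hk hkm => (hunitri k hk hkm).2.2), ?_⟩
  intro k hk hkn i j hi hij hjn
  obtain ⟨hST, hrow⟩ := hT k hk hkn
  exact eq_ibinom_of_firstRow_bseq hST hrow ⟨hi, hij, hjn⟩

end Steinhaus
end
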